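/- arXiv:1005.0523 — 10 statements merged into one kernel-verified Lean document; each statement's English description precedes it below -/
import Mathlib

section
/- Let m ≥ 2 be a natural number, ε > 0, and let P be a probability distribution on Fin m. Define M₀ = {j : P j < 1/(m·log₂ m)} and, for each integer i ≥ 1, M_i = {j : (1+ε)^{i-1}/(m·log₂ m) ≤ P j < (1+ε)^{i}/(m·log₂ m)}. Then: (i) P(M₀) ≤ 1/log₂ m; and (ii) for every i ≥ 1 such that M_i is nonempty (hence P(M_i) > 0), the L₁-distance between the restriction P|M_i and the uniform distribution on M_i is at most ε, i.e. ∑_{j ∈ M_i} |P j / P(M_i) − 1/|M_i|| ≤ ε. -/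
open Finset Real

/-- Bucketing lemma (Lemma 2.2 / `Bucket` properties from BFF+01):
(i) the low-probability bucket has mass at most `1 / log₂ m`;
(ii) within each nonempty bucket `M_i` (`i ≥ 1`), the restriction of `P`
is `ε`-close in `L₁` to the uniform distribution on the bucket. -/
theorem bucketing_lemma (m : ℕ) (hm : 2 ≤ m) (ε : ℝ) (hε : 0 < ε)
    (P : Fin m → ℝ) (hP : ∀ j, 0 ≤ P j) (hPsum : ∑ j, P j = 1) :
    (∑ j ∈ univ.filter (fun j => P j < 1 / (m * Real.logb 2 m)), P j
        ≤ 1 / Real.logb 2 m)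
    ∧ (∀ i : ℕ, 1 ≤ i →
        ∀ M : Finset (Fin m),
        M = univ.filter (fun j =>
          (1 + ε) ^ (i - 1) / (m * Real.logb 2 m) ≤ P j ∧
            P j < (1 + ε) ^ i / (m * Real.logb 2 m)) →
        M.Nonempty →
        ∑ j ∈ M, |P j / (∑ x ∈ M, P x) - 1 / (M.card : ℝ)| ≤ ε) := by
  have hm1 : (1:ℝ) < (m:ℝ) := by
    have : (2:ℝ) ≤ (m:ℝ) := by exact_mod_cast hm
    linarith
  have hlog : 0 < Real.logb 2 m := Real.logb_pos one_lt_two hm1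
  have hmpos : (0:ℝ) < (m:ℝ) := by linarith
  have hdenom : 0 < (m:ℝ) * Real.logb 2 m := mul_pos hmpos hlog
  constructor
  · set F := univ.filter (fun j => P j < 1 / ((m:ℝ) * Real.logb 2 m)) with hF
    calc ∑ j ∈ F, P j
        ≤ ∑ _j ∈ F, 1 / ((m:ℝ) * Real.logb 2 m) :=
          Finset.sum_le_sum fun j hj => (Finset.mem_filter.mp hj).2.le
      _ = (F.card : ℝ) * (1 / ((m:ℝ) * Real.logb 2 m)) := by
          rw [Finset.sum_const, nsmul_eq_mul]
      _ ≤ (m:ℝ) * (1 / ((m:ℝ) * Real.logb 2 m)) := by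
          apply mul_le_mul_of_nonneg_right _ (by positivity)
          have hcard : F.card ≤ m := by
            rw [hF]
            exact (Finset.card_filter_le _ _).trans (by simp)
          exact_mod_cast hcard
      _ = 1 / Real.logb 2 m := by
          field_simp
  · intro i hi M hM hMne
    obtain ⟨k, rfl⟩ := Nat.exists_eq_add_of_le hi
    set L := (1 + ε) ^ k / ((m:ℝ) * Real.logb 2 m) with hLdef
    have hL : 0 < L := by positivity
    have hmem : ∀ j ∈ M, L ≤ P j ∧ P j < (1 + ε) * L := by
      intro j hj
      rw [hM, Finset.mem_filter] at hj
      obtain ⟨-, h1, h2⟩ := hj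
      have e1 : 1 + k - 1 = k := by omega
      rw [e1] at h1
      have e2 : (1 + ε) ^ (1 + k) = (1 + ε) * (1 + ε) ^ k := by
        rw [pow_add, pow_one]
      rw [e2, mul_div_assoc] at h2
      exact ⟨h1, h2⟩
    set S := ∑ x ∈ M, P x with hSdef
    have hn : 0 < (M.card : ℝ) := by exact_mod_cast Finset.card_pos.mpr hMne
    have hS1 : (M.card : ℝ) * L ≤ S := by
      calc (M.card : ℝ) * L = ∑ _j ∈ M, L := by rw [Finset.sum_const, nsmul_eq_mul]
        _ ≤ S := Finset.sum_le_sum fun j hj => (hmem j hj).1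
    have hS2 : S ≤ (M.card : ℝ) * ((1 + ε) * L) := by
      calc S ≤ ∑ _j ∈ M, (1 + ε) * L :=
            Finset.sum_le_sum fun j hj => (hmem j hj).2.le
        _ = (M.card : ℝ) * ((1 + ε) * L) := by rw [Finset.sum_const, nsmul_eq_mul]
    have hSpos : 0 < S := lt_of_lt_of_le (by positivity) hS1
    have key : ∀ j ∈ M, |P j / S - 1 / (M.card : ℝ)| ≤ ε / (M.card : ℝ) := by
      intro j hj
      obtain ⟨h1, h2⟩ := hmem j hj
      have lo : (1 - ε) / (M.card : ℝ) ≤ P j / S := by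
        rw [div_le_div_iff₀ hn hSpos]
        nlinarith [mul_le_mul_of_nonneg_left hS1 hε.le,
          mul_le_mul_of_nonneg_right h1 hn.le, hS2]
      have hi' : P j / S ≤ (1 + ε) / (M.card : ℝ) := by
        rw [div_le_div_iff₀ hSpos hn]
        nlinarith [mul_le_mul_of_nonneg_right h2.le hn.le,
          mul_le_mul_of_nonneg_left hS1 (by linarith : (0:ℝ) ≤ 1 + ε)]
      have e1 : (1 - ε) / (M.card : ℝ) = 1 / (M.card : ℝ) - ε / (M.card : ℝ) := by ring
      have e2 : (1 + ε) / (M.card : ℝ) = 1 / (M.card : ℝ) + ε / (M.card : ℝ) := by ring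
      rw [abs_le]
      constructor
      · linarith
      · linarith
    calc ∑ j ∈ M, |P j / S - 1 / (M.card : ℝ)| ≤ ∑ _j ∈ M, ε / (M.card : ℝ) :=
          Finset.sum_le_sum key
      _ = (M.card : ℝ) * (ε / (M.card : ℝ)) := by rw [Finset.sum_const, nsmul_eq_mul]
      _ = ε := by field_simp
end

section
/- Let P and P' be probability distributions on Fin m and let {M₀, M₁, …, M_k} be a partition of Fin m. Suppose that for every i ∈ {0, 1, …, k} with P(M_i) > 0 and P'(M_i) > 0 we have ∑_{j ∈ M_i} |P j / P(M_i) − P' j / P'(M_i)| ≤ ε₁, and suppose that ∑_{i=0}^{k} |P(M_i) − P'(M_i)| ≤ ε₂. Then ∑_{j} |P j − P' j| ≤ ε₁ + ε₂. -/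
open Finset

/-- Lemma (BFF+01): if each restriction of `P` and `P'` to a part `M i`
(with positive mass under both) is `ε₁`-close in `L₁`, and the coarse
distributions induced on the parts are `ε₂`-close in `L₁`, then
`P` and `P'` are `(ε₁ + ε₂)`-close in `L₁`. -/
theorem partition_lemma (m k : ℕ) (ε₁ ε₂ : ℝ) (hε₁ : 0 ≤ ε₁) (hε₂ : 0 ≤ ε₂)
    (P P' : Fin m → ℝ)
    (hP : ∀ j, 0 ≤ P j) (hPsum : ∑ j, P j = 1)
    (hP' : ∀ j, 0 ≤ P' j) (hP'sum : ∑ j, P' j = 1)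
    (M : Fin (k + 1) → Finset (Fin m))
    (hpart : ∀ x : Fin m, ∃! i : Fin (k + 1), x ∈ M i)
    (hrestr : ∀ i : Fin (k + 1),
      0 < ∑ j ∈ M i, P j → 0 < ∑ j ∈ M i, P' j →
      ∑ j ∈ M i, |P j / (∑ x ∈ M i, P x) - P' j / (∑ x ∈ M i, P' x)| ≤ ε₁)
    (hcoarse : ∑ i : Fin (k + 1), |(∑ j ∈ M i, P j) - (∑ j ∈ M i, P' j)| ≤ ε₂) :
    ∑ j, |P j - P' j| ≤ ε₁ + ε₂ := by
  choose f hf hf' using hpart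
  have hM : ∀ i, M i = univ.filter (fun x => f x = i) := by
    intro i
    ext x
    simp only [mem_filter, mem_univ, true_and]
    exact ⟨fun hx => (hf' x i hx).symm, fun hx => hx ▸ hf x⟩
  have hsplit : ∀ g : Fin m → ℝ, ∑ j, g j = ∑ i, ∑ j ∈ M i, g j := by
    intro g
    rw [← Finset.sum_fiberwise univ f g]
    exact Finset.sum_congr rfl fun i _ => by rw [hM i]
  -- per-part bound
  have key : ∀ i, ∑ j ∈ M i, |P j - P' j| ≤
      ε₁ * (∑ j ∈ M i, P j) + |(∑ j ∈ M i, P j) - (∑ j ∈ M i, P' j)| := by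
    intro i
    set a := ∑ j ∈ M i, P j with ha
    set b := ∑ j ∈ M i, P' j with hb
    have ha0 : 0 ≤ a := Finset.sum_nonneg fun j _ => hP j
    have hb0 : 0 ≤ b := Finset.sum_nonneg fun j _ => hP' j
    rcases eq_or_lt_of_le ha0 with haz | hap
    · -- a = 0 : all P j = 0 on M i
      have hPz : ∀ j ∈ M i, P j = 0 := by
        intro j hj
        exact (Finset.sum_eq_zero_iff_of_nonneg (fun j _ => hP j)).mp haz.symm j hj
      have : ∑ j ∈ M i, |P j - P' j| = b := by
        rw [hb]
        apply Finset.sum_congr rfl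
        intro j hj
        rw [hPz j hj, zero_sub, abs_neg, abs_of_nonneg (hP' j)]
      rw [this, ← haz]
      have : |(0:ℝ) - b| = b := by rw [zero_sub, abs_neg, abs_of_nonneg hb0]
      nlinarith
    rcases eq_or_lt_of_le hb0 with hbz | hbp
    · have hPz : ∀ j ∈ M i, P' j = 0 := by
        intro j hj
        exact (Finset.sum_eq_zero_iff_of_nonneg (fun j _ => hP' j)).mp hbz.symm j hj
      have : ∑ j ∈ M i, |P j - P' j| = a := by
        rw [ha]
        apply Finset.sum_congr rfl
        intro j hj
        rw [hPz j hj, sub_zero, abs_of_nonneg (hP j)]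
      rw [this, ← hbz]
      have : |a - (0:ℝ)| = a := by rw [sub_zero, abs_of_nonneg ha0]
      nlinarith
    -- both positive
    have hstep : ∀ j ∈ M i, |P j - P' j| ≤
        a * |P j / a - P' j / b| + (P' j / b) * |a - b| := by
      intro j hj
      have hrw : P j - P' j = a * (P j / a - P' j / b) + (P' j / b) * (a - b) := by
        field_simp
        ring
      calc |P j - P' j| ≤ |a * (P j / a - P' j / b)| + |(P' j / b) * (a - b)| := by
            rw [hrw]; exact abs_add_le _ _
        _ = a * |P j / a - P' j / b| + (P' j / b) * |a - b| := by
            rw [abs_mul, abs_mul, abs_of_nonneg ha0,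
              abs_of_nonneg (div_nonneg (hP' j) hb0)]
    calc ∑ j ∈ M i, |P j - P' j|
        ≤ ∑ j ∈ M i, (a * |P j / a - P' j / b| + (P' j / b) * |a - b|) :=
          Finset.sum_le_sum hstep
      _ = a * (∑ j ∈ M i, |P j / a - P' j / b|) + (∑ j ∈ M i, P' j / b) * |a - b| := by
          rw [Finset.sum_add_distrib, Finset.mul_sum, Finset.sum_mul]
      _ ≤ a * ε₁ + 1 * |a - b| := by
          have h1 : ∑ j ∈ M i, P' j / b = 1 := by
            rw [← Finset.sum_div, ← hb, div_self (ne_of_gt hbp)]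
          rw [h1]
          gcongr
          exact hrestr i hap hbp
      _ = ε₁ * a + |a - b| := by ring
  calc ∑ j, |P j - P' j| = ∑ i, ∑ j ∈ M i, |P j - P' j| := hsplit _
    _ ≤ ∑ i, (ε₁ * (∑ j ∈ M i, P j) + |(∑ j ∈ M i, P j) - (∑ j ∈ M i, P' j)|) :=
        Finset.sum_le_sum fun i _ => key i
    _ = ε₁ * (∑ i, ∑ j ∈ M i, P j) +
        ∑ i, |(∑ j ∈ M i, P j) - (∑ j ∈ M i, P' j)| := by
        rw [Finset.sum_add_distrib, Finset.mul_sum]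
    _ ≤ ε₁ * 1 + ε₂ := by
        have : ∑ i, ∑ j ∈ M i, P j = 1 := by rw [← hsplit P, hPsum]
        rw [this]; gcongr
    _ = ε₁ + ε₂ := by ring
end

section
/- Let P and P' be probability distributions on Fin m, let {M₀, M₁, …, M_k} be a partition of Fin m (k+1 parts), and let ε₁, ε₂, ε₃ ≥ 0. Suppose that for every i ∈ {0, 1, …, k} satisfying P(M_i) ≥ ε₃/(k+1) and P'(M_i) > 0 we have ∑_{j ∈ M_i} |P j / P(M_i) − P' j / P'(M_i)| ≤ ε₁, and suppose that ∑_{i=0}^{k} |P(M_i) − P'(M_i)| ≤ ε₂. Then ∑_{j} |P j − P' j| ≤ 2(ε₁ + ε₂ + ε₃). -/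
/-!
On a part `M` with masses `a = P(M)` and `b = P'(M)` both positive,
`P j - P' j = a (P j / a - P' j / b) + (a - b) P' j / b`, so the part contributes at most
`a ε₁ + |a - b|` to the `L₁` distance whenever the restrictions are `ε₁`-close. Every other part
has `min a b < ε₃/(k+1)` or `min a b = 0`, and contributes at most `a + b = 2 min a b + |a - b|`.
Summing over the parts gives `ε₁ + ε₂ + 2 ε₃`.
-/

open Finset

theorem Finset.sum_univ_eq_sum_sum_of_existsUnique_mem {ι α β : Type*} [Fintype ι] [Fintype α]
    [AddCommMonoid β] (M : ι → Finset α) (hM : ∀ x, ∃! i, x ∈ M i) (f : α → β) :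
    ∑ x, f x = ∑ i, ∑ x ∈ M i, f x := by
  classical
  have hdisj : (↑(univ : Finset ι) : Set ι).PairwiseDisjoint M := fun i₁ _ i₂ _ hne ↦
    disjoint_left.mpr fun x hx₁ hx₂ ↦ hne ((hM x).unique hx₁ hx₂)
  rw [← sum_biUnion hdisj]
  refine sum_congr (eq_univ_of_forall fun x ↦ ?_).symm fun _ _ ↦ rfl
  simpa using (hM x).exists

section PartMass

variable {α : Type*} (s : Finset α) {p q : α → ℝ}

theorem sum_abs_sub_le_two_mul_min_add_abs_sub (hp : ∀ j ∈ s, 0 ≤ p j) (hq : ∀ j ∈ s, 0 ≤ q j) :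
    ∑ j ∈ s, |p j - q j| ≤
      2 * min (∑ j ∈ s, p j) (∑ j ∈ s, q j) + |∑ j ∈ s, p j - ∑ j ∈ s, q j| := by
  have hpq : ∑ j ∈ s, |p j - q j| ≤ ∑ j ∈ s, p j + ∑ j ∈ s, q j := by
    rw [← sum_add_distrib]
    refine sum_le_sum fun j hj ↦ ?_
    rw [abs_le]
    constructor <;> linarith [hp j hj, hq j hj]
  rcases le_total (∑ j ∈ s, p j) (∑ j ∈ s, q j) with h | h
  · rw [min_eq_left h, abs_of_nonpos (sub_nonpos.mpr h)]; linarith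
  · rw [min_eq_right h, abs_of_nonneg (sub_nonneg.mpr h)]; linarith

theorem sum_abs_sub_le_mul_sum_abs_div_sub_div_add_abs_sub (hq : ∀ j ∈ s, 0 ≤ q j)
    (ha : 0 < ∑ j ∈ s, p j) (hb : 0 < ∑ j ∈ s, q j) :
    ∑ j ∈ s, |p j - q j| ≤
      (∑ j ∈ s, p j) * ∑ j ∈ s, |p j / ∑ x ∈ s, p x - q j / ∑ x ∈ s, q x| +
        |∑ j ∈ s, p j - ∑ j ∈ s, q j| := by
  set a := ∑ j ∈ s, p j
  set b := ∑ j ∈ s, q j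
  have hpointwise : ∀ j ∈ s, |p j - q j| ≤ a * |p j / a - q j / b| + |a - b| * (q j / b) := by
    intro j hj
    have hsplit : p j - q j = a * (p j / a - q j / b) + (a - b) * (q j / b) := by
      field_simp
      ring
    calc |p j - q j| ≤ |a * (p j / a - q j / b)| + |(a - b) * (q j / b)| :=
          hsplit ▸ abs_add_le _ _
      _ = a * |p j / a - q j / b| + |a - b| * (q j / b) := by
          rw [abs_mul, abs_mul, abs_of_pos ha, abs_of_nonneg (div_nonneg (hq j hj) hb.le)]
  calc ∑ j ∈ s, |p j - q j| ≤ ∑ j ∈ s, (a * |p j / a - q j / b| + |a - b| * (q j / b)) :=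
        sum_le_sum hpointwise
    _ = a * ∑ j ∈ s, |p j / a - q j / b| + |a - b| * (b / b) := by
        rw [sum_add_distrib, ← mul_sum, ← mul_sum, ← sum_div]
    _ = a * ∑ j ∈ s, |p j / a - q j / b| + |a - b| := by rw [div_self hb.ne', mul_one]

theorem sum_abs_sub_le_of_restrict_le {ε δ : ℝ} (hε : 0 ≤ ε) (hδ : 0 ≤ δ)
    (hp : ∀ j ∈ s, 0 ≤ p j) (hq : ∀ j ∈ s, 0 ≤ q j)
    (hrestr : δ ≤ ∑ j ∈ s, p j → 0 < ∑ j ∈ s, q j →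
      ∑ j ∈ s, |p j / ∑ x ∈ s, p x - q j / ∑ x ∈ s, q x| ≤ ε) :
    ∑ j ∈ s, |p j - q j| ≤ ε * ∑ j ∈ s, p j + 2 * δ + |∑ j ∈ s, p j - ∑ j ∈ s, q j| := by
  have ha : 0 ≤ ∑ j ∈ s, p j := sum_nonneg hp
  by_cases hheavy : δ ≤ ∑ j ∈ s, p j ∧ 0 < ∑ j ∈ s, p j ∧ 0 < ∑ j ∈ s, q j
  · obtain ⟨hδa, hapos, hbpos⟩ := hheavy
    have hclose := mul_le_mul_of_nonneg_left (hrestr hδa hbpos) ha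
    linarith [sum_abs_sub_le_mul_sum_abs_div_sub_div_add_abs_sub s hq hapos hbpos]
  · have hmin : min (∑ j ∈ s, p j) (∑ j ∈ s, q j) ≤ δ := by
      have hb : 0 ≤ ∑ j ∈ s, q j := sum_nonneg hq
      simp only [not_and_or, not_le, not_lt] at hheavy
      rcases hheavy with h | h | h
      · exact (min_le_left _ _).trans h.le
      · exact (min_le_left _ _).trans (h.trans hδ)
      · exact (min_le_right _ _).trans (h.trans hδ)
    linarith [sum_abs_sub_le_two_mul_min_add_abs_sub s hp hq, mul_nonneg hε ha]

end PartMass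

theorem partition_corollary_general (m k : ℕ) (ε₁ ε₂ ε₃ : ℝ)
    (hε₁ : 0 ≤ ε₁) (hε₂ : 0 ≤ ε₂) (hε₃ : 0 ≤ ε₃)
    (P P' : Fin m → ℝ)
    (hP : ∀ j, 0 ≤ P j) (hPsum : ∑ j, P j = 1)
    (hP' : ∀ j, 0 ≤ P' j)
    (M : Fin (k + 1) → Finset (Fin m))
    (hpart : ∀ x : Fin m, ∃! i : Fin (k + 1), x ∈ M i)
    (hrestr : ∀ i : Fin (k + 1),
      ε₃ / (k + 1) ≤ ∑ j ∈ M i, P j → 0 < ∑ j ∈ M i, P' j →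
      ∑ j ∈ M i, |P j / (∑ x ∈ M i, P x) - P' j / (∑ x ∈ M i, P' x)| ≤ ε₁)
    (hcoarse : ∑ i : Fin (k + 1), |(∑ j ∈ M i, P j) - (∑ j ∈ M i, P' j)| ≤ ε₂) :
    ∑ j, |P j - P' j| ≤ 2 * (ε₁ + ε₂ + ε₃) := by
  have hparts : ∑ i, ∑ j ∈ M i, P j = 1 := by
    rw [← sum_univ_eq_sum_sum_of_existsUnique_mem M hpart, hPsum]
  have hlight : ∑ _i : Fin (k + 1), 2 * (ε₃ / (k + 1)) = 2 * ε₃ := by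
    rw [sum_const, card_univ, Fintype.card_fin, nsmul_eq_mul]
    field_simp
    push_cast
    ring
  calc ∑ j, |P j - P' j| = ∑ i, ∑ j ∈ M i, |P j - P' j| :=
        sum_univ_eq_sum_sum_of_existsUnique_mem M hpart _
    _ ≤ ∑ i, (ε₁ * ∑ j ∈ M i, P j + 2 * (ε₃ / (k + 1)) +
          |∑ j ∈ M i, P j - ∑ j ∈ M i, P' j|) :=
        sum_le_sum fun i _ ↦ sum_abs_sub_le_of_restrict_le (M i) hε₁ (by positivity)
          (fun j _ ↦ hP j) (fun j _ ↦ hP' j) (hrestr i)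
    _ = ε₁ + 2 * ε₃ + ∑ i, |∑ j ∈ M i, P j - ∑ j ∈ M i, P' j| := by
        rw [sum_add_distrib, sum_add_distrib, ← mul_sum, hparts, hlight, mul_one]
    _ ≤ 2 * (ε₁ + ε₂ + ε₃) := by linarith

/-- Corollary (of the partition lemma, BFF+01): if each restriction of `P` and `P'`
to a part `M i` with `P`-mass at least `ε₃/(k+1)` (and positive `P'`-mass) is
`ε₁`-close in `L₁`, and the coarse distributions on the parts are `ε₂`-close,
then `P` and `P'` are `2(ε₁ + ε₂ + ε₃)`-close in `L₁`. -/
theorem partition_corollary (m k : ℕ) (ε₁ ε₂ ε₃ : ℝ)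
    (hε₁ : 0 ≤ ε₁) (hε₂ : 0 ≤ ε₂) (hε₃ : 0 ≤ ε₃)
    (P P' : Fin m → ℝ)
    (hP : ∀ j, 0 ≤ P j) (hPsum : ∑ j, P j = 1)
    (hP' : ∀ j, 0 ≤ P' j) (hP'sum : ∑ j, P' j = 1)
    (M : Fin (k + 1) → Finset (Fin m))
    (hpart : ∀ x : Fin m, ∃! i : Fin (k + 1), x ∈ M i)
    (hrestr : ∀ i : Fin (k + 1),
      ε₃ / (k + 1) ≤ ∑ j ∈ M i, P j → 0 < ∑ j ∈ M i, P' j →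
      ∑ j ∈ M i, |P j / (∑ x ∈ M i, P x) - P' j / (∑ x ∈ M i, P' x)| ≤ ε₁)
    (hcoarse : ∑ i : Fin (k + 1), |(∑ j ∈ M i, P j) - (∑ j ∈ M i, P' j)| ≤ ε₂) :
    ∑ j, |P j - P' j| ≤ 2 * (ε₁ + ε₂ + ε₃) :=
  partition_corollary_general m k ε₁ ε₂ ε₃ hε₁ hε₂ hε₃ P P' hP hPsum hP' M hpart hrestr hcoarse
end

section
/- Let m ≥ 1, let 0 < ε ≤ 1, and let P be a probability distribution on Fin m such that |P z − 1/m| ≤ ε/(4m) for every z. Then 1/m ≤ ∑_{z} P z · min(3/m, P z) ≤ (1 + ε²/16)/m. -/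
open Finset

/-- First item of Lemma `cl:conc`: if `P` is within `L∞`-distance `ε/(4m)` of
uniform, then the expectation `∑ z, P z · min(3/m, P z)` of the truncated
probability of a single sample lies between `1/m` and `(1 + ε²/16)/m`. -/
theorem truncated_expectation_uniform_case (m : ℕ) (hm : 1 ≤ m) (ε : ℝ)
    (hε₀ : 0 < ε) (hε₁ : ε ≤ 1)
    (P : Fin m → ℝ) (hP : ∀ j, 0 ≤ P j) (hPsum : ∑ j, P j = 1)
    (hclose : ∀ z, |P z - 1 / m| ≤ ε / (4 * m)) :
    1 / (m : ℝ) ≤ ∑ z, P z * min (3 / (m:ℝ)) (P z) ∧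
      ∑ z, P z * min (3 / (m:ℝ)) (P z) ≤ (1 + ε ^ 2 / 16) / m := by
  have hm' : (0:ℝ) < m := by exact_mod_cast Nat.lt_of_lt_of_le Nat.zero_lt_one hm
  have hmin : ∀ z, min (3 / (m:ℝ)) (P z) = P z := by
    intro z
    have h := abs_le.1 (hclose z)
    have : P z ≤ 3 / m := by
      rw [le_div_iff₀ hm']
      have h5 : (P z - 1/m) * (4*m) ≤ (ε/(4*m)) * (4*m) :=
        mul_le_mul_of_nonneg_right h.2 (by positivity)
      have h6 : (ε/(4*m)) * (4*m) = ε := by field_simp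
      have h7 : (P z - 1/m) * (4*m) = P z * (4*m) - 4 := by field_simp
      nlinarith [hm']
    exact min_eq_right this
  have hsum : ∑ z, P z * min (3 / (m:ℝ)) (P z) = ∑ z, P z ^ 2 := by
    apply Finset.sum_congr rfl
    intro z _
    rw [hmin z]; ring
  have hkey : ∑ z, (P z - 1 / m) ^ 2 = ∑ z, P z ^ 2 - 1 / m := by
    have hexp : ∀ z : Fin m, (P z - 1 / m) ^ 2
        = P z ^ 2 - (2 / m) * P z + 1 / m ^ 2 := by intro z; field_simp; ring
    rw [Finset.sum_congr rfl fun z _ => hexp z]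
    rw [Finset.sum_add_distrib, Finset.sum_sub_distrib, ← Finset.mul_sum, hPsum,
      Finset.sum_const, Finset.card_univ, Fintype.card_fin, nsmul_eq_mul]
    field_simp
    ring
  have hnonneg : 0 ≤ ∑ z, (P z - 1 / m) ^ 2 :=
    Finset.sum_nonneg fun z _ => sq_nonneg _
  have hupper : ∑ z, (P z - 1 / m) ^ 2 ≤ m * (ε / (4 * m)) ^ 2 := by
    calc ∑ z, (P z - 1 / m) ^ 2 ≤ ∑ _z : Fin m, (ε / (4 * m)) ^ 2 := by
          apply Finset.sum_le_sum
          intro z _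
          have := hclose z
          nlinarith [abs_nonneg (P z - 1 / m), sq_abs (P z - 1 / m)]
      _ = m * (ε / (4 * m)) ^ 2 := by
          rw [Finset.sum_const, Finset.card_univ, Fintype.card_fin, nsmul_eq_mul]
  rw [hsum]
  constructor
  · nlinarith [hnonneg, hkey]
  · have : (m:ℝ) * (ε / (4 * m)) ^ 2 = ε ^ 2 / (16 * m) := by
      field_simp; ring
    rw [this] at hupper
    rw [hkey] at hupper
    have hε2 : ε ^ 2 / (16 * m) = (ε ^ 2 / 16) / m := by ring
    rw [hε2] at hupper
    have : (1 + ε ^ 2 / 16) / m = 1 / m + (ε ^ 2 / 16) / m := by ring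
    rw [this]
    linarith
end

section
/- Let m ≥ 1, let 0 < ε ≤ 2, and let P be a probability distribution on Fin m such that ∑_{z} |P z − 1/m| ≥ ε (i.e. P is ε-far from uniform in L₁-distance). Then ∑_{z} P z · min(3/m, P z) ≥ (1 + ε²/4)/m. -/
open Finset

/-!
Write `u = 1/m` and `δ = P z - u`. Pointwise, `P z · min (3u) (P z) ≥ u P z + u δ + min (δ², u|δ|)`,
with equality below the truncation level. Summing, the first two terms contribute `u`, so it
remains to show `∑ min (δ², u|δ|) ≥ u ε²/4`. Splitting `|δ| = a + b` with `a = min |δ| u`, the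
summand is `a² + u b`; Cauchy–Schwarz gives `∑ a² ≥ u (∑ a)²`, and `∑ a + ∑ b ≥ ε` with `ε ≤ 2`
forces `(∑ a)² + ∑ b ≥ ε²/4`.
-/

lemma le_mul_min_three_mul {u : ℝ} (hu : 0 ≤ u) (p : ℝ) :
    u * p + u * (p - u) + min ((p - u) ^ 2) (u * |p - u|) ≤ p * min (3 * u) p := by
  rcases le_or_gt p (3 * u) with hp | hp
  · rw [min_eq_right hp]
    nlinarith [min_le_left ((p - u) ^ 2) (u * |p - u|)]
  · rw [min_eq_left hp.le, abs_of_nonneg (by linarith)]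
    nlinarith [min_le_right ((p - u) ^ 2) (u * (p - u))]

lemma min_sq_mul_abs_eq {u : ℝ} (hu : 0 ≤ u) (y : ℝ) :
    min (y ^ 2) (u * |y|) = min |y| u ^ 2 + u * (|y| - min |y| u) := by
  rcases le_total |y| u with hy | hy
  · rw [min_eq_left hy, ← sq_abs, min_eq_left (by nlinarith [abs_nonneg y])]
    ring
  · rw [min_eq_right hy, ← sq_abs, min_eq_right (by nlinarith)]
    ring

lemma sq_div_four_le_sq_add {ε s t : ℝ} (hε₀ : 0 ≤ ε) (hε₂ : ε ≤ 2) (hs : 0 ≤ s)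
    (ht : 0 ≤ t) (hst : ε ≤ s + t) : ε ^ 2 / 4 ≤ s ^ 2 + t := by
  rcases le_or_gt (ε ^ 2 / 4) t with hεt | hεt
  · nlinarith
  · have : ε / 2 ≤ s := by nlinarith
    nlinarith

lemma mul_sq_div_four_le_sum_min_sq_mul_abs {ι : Type*} [Fintype ι] {u ε : ℝ} (hu : 0 ≤ u)
    (hcard : Fintype.card ι * u ≤ 1) (hε₀ : 0 ≤ ε) (hε₂ : ε ≤ 2) (x : ι → ℝ)
    (hx : ε ≤ ∑ i, |x i|) : u * (ε ^ 2 / 4) ≤ ∑ i, min (x i ^ 2) (u * |x i|) := by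
  set a : ι → ℝ := fun i => min |x i| u
  have hCS : u * (∑ i, a i) ^ 2 ≤ ∑ i, a i ^ 2 :=
    calc u * (∑ i, a i) ^ 2 ≤ u * (Fintype.card ι * ∑ i, a i ^ 2) :=
          mul_le_mul_of_nonneg_left sq_sum_le_card_mul_sum_sq hu
      _ = (Fintype.card ι * u) * ∑ i, a i ^ 2 := by ring
      _ ≤ ∑ i, a i ^ 2 :=
          mul_le_of_le_one_left (sum_nonneg fun i _ => sq_nonneg _) hcard
  have hsplit : ε ≤ ∑ i, a i + ∑ i, (|x i| - a i) := by
    rwa [← sum_add_distrib, sum_congr rfl fun i _ => add_sub_cancel (a i) |x i|]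
  have ha : 0 ≤ ∑ i, a i := sum_nonneg fun i _ => le_min (abs_nonneg _) hu
  have hb : 0 ≤ ∑ i, (|x i| - a i) := sum_nonneg fun i _ => sub_nonneg.2 (min_le_left _ _)
  calc u * (ε ^ 2 / 4) ≤ u * ((∑ i, a i) ^ 2 + ∑ i, (|x i| - a i)) :=
        mul_le_mul_of_nonneg_left (sq_div_four_le_sq_add hε₀ hε₂ ha hb hsplit) hu
    _ ≤ ∑ i, a i ^ 2 + u * ∑ i, (|x i| - a i) := by linarith
    _ = ∑ i, min (x i ^ 2) (u * |x i|) := by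
        rw [mul_sum, ← sum_add_distrib]
        exact sum_congr rfl fun i _ => (min_sq_mul_abs_eq hu (x i)).symm

theorem truncated_expectation_far_case_general (m : ℕ) (ε : ℝ)
    (hε₀ : 0 < ε) (hε₂ : ε ≤ 2)
    (P : Fin m → ℝ) (hPsum : ∑ j, P j = 1)
    (hfar : ε ≤ ∑ z, |P z - 1 / m|) :
    (1 + ε ^ 2 / 4) / m ≤ ∑ z, P z * min (3 / (m:ℝ)) (P z) := by
  set u : ℝ := (m : ℝ)⁻¹
  have hu : 0 ≤ u := by positivity
  have hmu : (m : ℝ) * u ≤ 1 := mul_inv_le_one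
  have hM := mul_sq_div_four_le_sum_min_sq_mul_abs hu (by simpa using hmu) hε₀.le hε₂
    (fun z => P z - u) (by simpa [u] using hfar)
  calc (1 + ε ^ 2 / 4) / m ≤ u * ∑ z, P z + u * (∑ z, P z - m * u)
        + ∑ z, min ((P z - u) ^ 2) (u * |P z - u|) := by
        rw [hPsum, div_eq_mul_inv]
        nlinarith
    _ = ∑ z, (u * P z + u * (P z - u) + min ((P z - u) ^ 2) (u * |P z - u|)) := by
        simp only [sum_add_distrib, ← mul_sum, sum_sub_distrib, sum_const, card_univ,
          Fintype.card_fin, nsmul_eq_mul]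
    _ ≤ ∑ z, P z * min (3 * u) (P z) := sum_le_sum fun z _ => le_mul_min_three_mul hu (P z)
    _ = ∑ z, P z * min (3 / (m:ℝ)) (P z) := by rw [div_eq_mul_inv]

/-- Second item of Lemma `cl:conc`: if `P` is `ε`-far from uniform in `L₁`,
then the expectation `∑ z, P z · min(3/m, P z)` of the truncated probability of
a single sample is at least `(1 + ε²/4)/m`. -/
theorem truncated_expectation_far_case (m : ℕ) (hm : 1 ≤ m) (ε : ℝ)
    (hε₀ : 0 < ε) (hε₂ : ε ≤ 2)
    (P : Fin m → ℝ) (hP : ∀ j, 0 ≤ P j) (hPsum : ∑ j, P j = 1)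
    (hfar : ε ≤ ∑ z, |P z - 1 / m|) :
    (1 + ε ^ 2 / 4) / m ≤ ∑ z, P z * min (3 / (m:ℝ)) (P z) :=
  truncated_expectation_far_case_general m ε hε₀ hε₂ P hPsum hfar
end

section
/- Let m ≥ 1 and t ≥ 1, let 0 < ε ≤ 1, and let μ be a probability measure on Fin m with |μ {j} − 1/m| ≤ ε/(4m) for every j. Write P j = μ {j} and define, on the product space (Fin t → Fin m) with measure μ^{⊗t}, the random variable W(ω) = ∑_{j < t} P(ω j). Then the probability of the event { ω : |W(ω) − t/m| > 3ε²·t/(32m) } is at most 2·exp(−ε⁴·t/4608). -/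
/-!
Each sample contributes `P Yᵢ ∈ [1/m - ε/(4m), 1/m + ε/(4m)]`, and its mean is the collision
probability `∑ⱼ P j ^ 2`, which exceeds `1/m` by `∑ⱼ (P j - 1/m) ^ 2 ≤ ε²/(16m)`. Hence `t/m` lies
within `2s` of `E W`, where `s = ε²t/(32m)`, so the event forces `|W - E W| ≥ s`, whose
probability Hoeffding's inequality bounds by `2 exp(-ε²t/128)`.
-/

open MeasureTheory ProbabilityTheory Real
open scoped NNReal

lemma ProbabilityTheory.HasSubgaussianMGF.measureReal_abs_ge_le {Ω : Type*}
    {mΩ : MeasurableSpace Ω} {μ : Measure Ω} {X : Ω → ℝ} {c : ℝ≥0} (h : HasSubgaussianMGF X c μ)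
    {s : ℝ} (hs : 0 ≤ s) :
    μ.real {ω | s ≤ |X ω|} ≤ 2 * exp (-s ^ 2 / (2 * c)) := by
  have hsplit : {ω | s ≤ |X ω|} = {ω | s ≤ X ω} ∪ {ω | s ≤ (-X) ω} := by
    ext ω
    simp only [Set.mem_ofPred_eq, Set.mem_union, Pi.neg_apply, le_abs]
  calc μ.real {ω | s ≤ |X ω|} ≤ μ.real {ω | s ≤ X ω} + μ.real {ω | s ≤ (-X) ω} := by
        rw [hsplit]; exact measureReal_union_le _ _
    _ ≤ exp (-s ^ 2 / (2 * c)) + exp (-s ^ 2 / (2 * c)) :=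
        add_le_add (h.measure_ge_le hs) (h.neg.measure_ge_le hs)
    _ = 2 * exp (-s ^ 2 / (2 * c)) := (two_mul _).symm

lemma measureReal_pi_abs_sum_sub_ge_le {ι Ω : Type*} [Fintype ι] [MeasurableSpace Ω]
    (μ : Measure Ω) [IsProbabilityMeasure μ] {f : Ω → ℝ} (hf : Measurable f) {c δ : ℝ}
    (hfc : ∀ x, |f x - c| ≤ δ) {s : ℝ} (hs : 0 ≤ s) :
    (Measure.pi fun _ : ι => μ).real
        {ω | s ≤ |∑ i, f (ω i) - Fintype.card ι * ∫ x, f x ∂μ|}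
      ≤ 2 * exp (-s ^ 2 / (2 * Fintype.card ι * δ ^ 2)) := by
  set ν := Measure.pi fun _ : ι => μ
  have hindep : iIndepFun (fun i ω => f (ω i) - ∫ x, f x ∂μ) ν :=
    iIndepFun_pi (X := fun _ x => f x - ∫ x, f x ∂μ) fun _ => (hf.sub_const _).aemeasurable
  have hsubG : ∀ i, HasSubgaussianMGF (fun ω => f (ω i) - ∫ x, f x ∂μ)
      ((‖(c + δ) - (c - δ)‖₊ / 2) ^ 2) ν := by
    intro i
    have h := hasSubgaussianMGF_of_mem_Icc (μ := ν) (X := fun ω => f (ω i)) (a := c - δ)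
      (b := c + δ) (hf.comp (measurable_pi_apply i)).aemeasurable
      (ae_of_all _ fun ω => by
        obtain ⟨hlo, hhi⟩ := abs_le.1 (hfc (ω i))
        constructor <;> linarith)
    rwa [integral_comp_eval hf.aestronglyMeasurable] at h
  have h := (HasSubgaussianMGF.sum_of_iIndepFun hindep (s := Finset.univ)
    fun i _ => hsubG i).measureReal_abs_ge_le hs
  simp only [Finset.sum_sub_distrib, Finset.sum_const, Finset.card_univ, nsmul_eq_mul] at h
  refine h.trans_eq ?_
  congr 3
  push_cast
  rw [Real.norm_eq_abs, div_pow, sq_abs]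
  ring

lemma sum_sq_sub_inv_card_eq {α : Type*} [Fintype α] {p : α → ℝ} (hp : ∑ x, p x = 1) :
    ∑ x, p x ^ 2 - (Fintype.card α : ℝ)⁻¹ = ∑ x, (p x - (Fintype.card α : ℝ)⁻¹) ^ 2 := by
  have hn : (Fintype.card α : ℝ) * (Fintype.card α : ℝ)⁻¹ ^ 2 = (Fintype.card α : ℝ)⁻¹ := by
    rw [inv_pow, ← div_eq_mul_inv, sq, div_self_mul_self']
  simp only [sub_sq, Finset.sum_add_distrib, Finset.sum_sub_distrib, ← Finset.sum_mul,
    ← Finset.mul_sum, hp, Finset.sum_const, Finset.card_univ, nsmul_eq_mul]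
  linear_combination -hn

lemma abs_sum_sq_sub_inv_card_le {α : Type*} [Fintype α] {p : α → ℝ} (hp : ∑ x, p x = 1)
    {δ : ℝ} (hδ : ∀ x, |p x - (Fintype.card α : ℝ)⁻¹| ≤ δ) :
    |∑ x, p x ^ 2 - (Fintype.card α : ℝ)⁻¹| ≤ Fintype.card α * δ ^ 2 := by
  rw [sum_sq_sub_inv_card_eq hp, abs_of_nonneg (Finset.sum_nonneg fun x _ => sq_nonneg _)]
  calc ∑ x, (p x - (Fintype.card α : ℝ)⁻¹) ^ 2 ≤ ∑ _x : α, δ ^ 2 :=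
        Finset.sum_le_sum fun x _ => by
          simpa only [sq_abs] using pow_le_pow_left₀ (abs_nonneg _) (hδ x) 2
    _ = Fintype.card α * δ ^ 2 := by simp

lemma integral_measureReal_singleton {α : Type*} [Fintype α] [MeasurableSpace α]
    [MeasurableSingletonClass α] (μ : Measure α) [IsFiniteMeasure μ] :
    ∫ x, μ.real {x} ∂μ = ∑ x, μ.real {x} ^ 2 := by
  simp [integral_fintype, sq]

/-- Concentration in the near-uniform case: if `μ` is within `L∞`-distance
`ε/(4m)` of uniform, then the empirical weight `W(ω) = ∑_{j<t} P(ω j)` of `t`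
i.i.d. samples deviates from `t/m` by more than `3ε²t/(32m)` with probability
at most `2·exp(−ε⁴t/4608)`. -/
theorem weight_concentration_uniform_case (m t : ℕ) (hm : 1 ≤ m) (ht : 1 ≤ t)
    (ε : ℝ) (hε₀ : 0 < ε) (hε₁ : ε ≤ 1)
    (μ : Measure (Fin m)) [IsProbabilityMeasure μ]
    (hclose : ∀ j : Fin m, |(μ {j}).toReal - 1 / m| ≤ ε / (4 * m)) :
    (Measure.pi fun _ : Fin t => μ)
      {ω : Fin t → Fin m |
        3 * ε ^ 2 * t / (32 * m) <
          |(∑ j : Fin t, (μ {ω j}).toReal) - t / m|}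
      ≤ ENNReal.ofReal (2 * Real.exp (-(ε ^ 4 * t / 4608))) := by
  have hm₀ : (0 : ℝ) < m := by exact_mod_cast hm
  have ht₀ : (0 : ℝ) < t := by exact_mod_cast ht
  set s := ε ^ 2 * t / (32 * m)
  have hclose' : ∀ j, |μ.real {j} - (Fintype.card (Fin m) : ℝ)⁻¹| ≤ ε / (4 * m) := by
    simpa [measureReal_def] using hclose
  have hmean : |t * ∫ j, μ.real {j} ∂μ - t / m| ≤ 2 * s := by
    have hcoll := abs_sum_sq_sub_inv_card_le (by simp) hclose'
    rw [Fintype.card_fin] at hcoll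
    rw [integral_measureReal_singleton, div_eq_mul_inv, ← mul_sub, abs_mul, abs_of_pos ht₀]
    calc t * |∑ j, μ.real {j} ^ 2 - (m : ℝ)⁻¹| ≤ t * (m * (ε / (4 * m)) ^ 2) := by gcongr
      _ = 2 * s := by simp only [s]; field_simp; ring
  have hexp :
      -s ^ 2 / (2 * Fintype.card (Fin t) * (ε / (4 * m)) ^ 2) ≤ -(ε ^ 4 * t / 4608) := by
    have hexponent :
        -s ^ 2 / (2 * Fintype.card (Fin t) * (ε / (4 * m)) ^ 2) = -(ε ^ 2 * t / 128) := by
      simp only [Fintype.card_fin, s]; field_simp; ring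
    have hε₄ : ε ^ 4 ≤ ε ^ 2 := pow_le_pow_of_le_one hε₀.le hε₁ (by norm_num)
    rw [hexponent, neg_le_neg_iff]
    nlinarith
  have htail := measureReal_pi_abs_sum_sub_ge_le (ι := Fin t) μ (measurable_of_finite _)
    hclose' (s := s) (by positivity)
  rw [← ofReal_measureReal]
  refine ENNReal.ofReal_le_ofReal ((measureReal_mono fun ω hω => ?_).trans (htail.trans ?_))
  · simp only [Set.mem_ofPred_eq, Fintype.card_fin, ← measureReal_def] at hω ⊢
    have htriangle := abs_sub_le (∑ j, μ.real {ω j}) (t * ∫ j, μ.real {j} ∂μ) (t / m)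
    have h3s : 3 * ε ^ 2 * t / (32 * m) = 3 * s := by ring
    linarith
  · gcongr
end

section
/- Let m ≥ 1 and t ≥ 1, let 0 < ε ≤ 2, and let μ be a probability measure on Fin m with ∑_{j} |μ {j} − 1/m| ≥ ε (i.e. μ is ε-far from uniform in L₁-distance). Write P j = μ {j} and define, on the product space (Fin t → Fin m) with measure μ^{⊗t}, the random variable W̃(ω) = ∑_{j < t} min(3/m, P(ω j)). Then the probability of the event { ω : W̃(ω) ≤ (1 + 3ε²/16)·t/m } is at most exp(−ε⁴·t/4608). -/
/-!
Each summand `min (3 / m) (P (ω j))` lies in `[0, 3 / m]`, so by Hoeffding's inequality `W̃` lies at least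
`s` below its mean `t · ∑ k, P k * min (3 / m) (P k)` with probability at most
`exp (-2 s ^ 2 / (t (3 / m) ^ 2))`. It remains to show that the mean is at least
`(1 + ε ^ 2 / 2) t / m`. Write `P k = 1 / m + δ k`. The term `P k * min (3 / m) (P k)` exceeds
`2 P k / m - 1 / m ^ 2`, whose sum over `k` is `1 / m`, by `δ k ^ 2` if `P k ≤ 3 / m` and by
`δ k / m > 0` otherwise. Cauchy–Schwarz on the first group and `∑ δ k ≤ 1` on the second bound
the total excess below by `(∑ k, |δ k|) ^ 2 / (2 m)`.
-/

open MeasureTheory ProbabilityTheory Real Finset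

lemma measureReal_pi_sum_le_le_exp_of_mem_Icc {α ι : Type*} [MeasurableSpace α] [Fintype ι]
    (μ : Measure α) [IsProbabilityMeasure μ] {f : α → ℝ} (hf : AEMeasurable f μ) {a b : ℝ}
    (hab : ∀ᵐ x ∂μ, f x ∈ Set.Icc a b) {s : ℝ} (hs : 0 ≤ s) :
    (Measure.pi fun _ : ι ↦ μ).real {ω | ∑ i, f (ω i) ≤ Fintype.card ι * μ[f] - s}
      ≤ exp (-s ^ 2 / (2 * Fintype.card ι * ((b - a) / 2) ^ 2)) := by
  have hsubG : HasSubgaussianMGF (fun x ↦ μ[f] - f x) ((‖b - a‖₊ / 2) ^ 2) μ :=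
    (hasSubgaussianMGF_of_mem_Icc hf hab).neg.congr (ae_of_all _ fun _ ↦ neg_sub _ _)
  have hcoord (i : ι) : HasSubgaussianMGF (fun ω : ι → α ↦ μ[f] - f (ω i))
      ((‖b - a‖₊ / 2) ^ 2) (Measure.pi fun _ ↦ μ) := by
    have hi := measurePreserving_eval (fun _ : ι ↦ μ) i
    exact .of_map (X := fun x ↦ μ[f] - f x) hi.measurable.aemeasurable (by rwa [hi.map_eq])
  have hindep : iIndepFun (fun i (ω : ι → α) ↦ μ[f] - f (ω i)) (Measure.pi fun _ ↦ μ) :=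
    iIndepFun_pi (X := fun _ x ↦ μ[f] - f x) fun _ ↦ aemeasurable_const.sub hf
  have hoeffding := HasSubgaussianMGF.measure_sum_ge_le_of_iIndepFun hindep
    (s := univ) (fun i _ ↦ hcoord i) hs
  convert hoeffding using 3
  · ext ω
    simp only [sum_sub_distrib, sum_const, card_univ, nsmul_eq_mul, le_sub_comm]
  · simp [mul_assoc, div_pow]

noncomputable def truncationGain (n p : ℝ) : ℝ :=
  if p ≤ 3 / n then (p - 1 / n) ^ 2 else (p - 1 / n) / n

lemma two_mul_div_sub_add_truncationGain_le_mul_min {n : ℝ} (hn : 0 < n) (p : ℝ) :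
    2 * p / n - 1 / n ^ 2 + truncationGain n p ≤ p * min (3 / n) p := by
  unfold truncationGain
  split_ifs with h
  · rw [min_eq_right h]
    field_simp
    nlinarith
  · rw [min_eq_left (le_of_not_ge h)]
    field_simp
    nlinarith

section

variable {ι : Type*} [Fintype ι] [Nonempty ι] {P : ι → ℝ}

lemma sq_sum_abs_sub_inv_card_le (hP : ∀ k, 0 ≤ P k) (hP1 : ∑ k, P k = 1) :
    (∑ k, |P k - 1 / Fintype.card ι|) ^ 2
      ≤ 2 * Fintype.card ι * ∑ k, truncationGain (Fintype.card ι) (P k) := by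
  set n : ℝ := (Fintype.card ι : ℝ)
  set A := univ.filter fun k ↦ P k ≤ 3 / n
  set B := univ.filter fun k ↦ ¬ P k ≤ 3 / n
  have hn : 0 < n := Nat.cast_pos.mpr Fintype.card_pos
  have hB (k) (hk : k ∈ B) : 0 < P k - 1 / n := by
    have : 1 / n < 3 / n := by gcongr; norm_num
    linarith [not_le.mp (mem_filter.mp hk).2]
  have hCS : (∑ k ∈ A, |P k - 1 / n|) ^ 2 ≤ n * ∑ k ∈ A, (P k - 1 / n) ^ 2 := by
    refine (sq_sum_le_card_mul_sum_sq (s := A) (f := fun k ↦ |P k - 1 / n|)).trans ?_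
    simp only [sq_abs]
    gcongr
    exact Nat.cast_le.mpr (card_le_univ A)
  have hSB : ∑ k ∈ B, (P k - 1 / n) ≤ 1 := calc
    ∑ k ∈ B, (P k - 1 / n) ≤ ∑ k ∈ B, P k := sum_le_sum fun k _ ↦ by
      linarith [show 0 ≤ 1 / n by positivity]
    _ ≤ ∑ k, P k := sum_le_sum_of_subset_of_nonneg (subset_univ B) fun k _ _ ↦ hP k
    _ = 1 := hP1
  have hSB0 : 0 ≤ ∑ k ∈ B, (P k - 1 / n) := sum_nonneg fun k hk ↦ (hB k hk).le
  unfold truncationGain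
  rw [sum_ite, ← sum_filter_add_sum_filter_not univ (fun k ↦ P k ≤ 3 / n),
    sum_congr rfl fun k hk ↦ abs_of_pos (hB k hk), ← sum_div]
  set SA := ∑ k ∈ A, |P k - 1 / n|
  set SB := ∑ k ∈ B, (P k - 1 / n)
  calc (SA + SB) ^ 2 ≤ 2 * SA ^ 2 + 2 * SB ^ 2 := by nlinarith [sq_nonneg (SA - SB)]
    _ ≤ 2 * (n * ∑ k ∈ A, (P k - 1 / n) ^ 2) + 2 * SB := by nlinarith
    _ = 2 * n * (∑ k ∈ A, (P k - 1 / n) ^ 2 + SB / n) := by field_simp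

lemma inv_card_add_sq_sum_abs_sub_le_sum_mul_min (hP : ∀ k, 0 ≤ P k) (hP1 : ∑ k, P k = 1) :
    1 / Fintype.card ι + (∑ k, |P k - 1 / Fintype.card ι|) ^ 2 / (2 * Fintype.card ι)
      ≤ ∑ k, P k * min (3 / (Fintype.card ι : ℝ)) (P k) := by
  set n : ℝ := (Fintype.card ι : ℝ)
  have hn : 0 < n := Nat.cast_pos.mpr Fintype.card_pos
  have hlin : ∑ k, (2 * P k / n - 1 / n ^ 2) = 1 / n := by
    rw [sum_sub_distrib, ← sum_div, ← mul_sum, hP1, sum_const, card_univ, nsmul_eq_mul]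
    field_simp
    ring
  calc 1 / n + (∑ k, |P k - 1 / n|) ^ 2 / (2 * n)
      ≤ 1 / n + ∑ k, truncationGain n (P k) := by
        gcongr
        rw [div_le_iff₀' (by positivity)]
        exact sq_sum_abs_sub_inv_card_le hP hP1
    _ = ∑ k, (2 * P k / n - 1 / n ^ 2 + truncationGain n (P k)) := by
        rw [sum_add_distrib, hlin]
    _ ≤ ∑ k, P k * min (3 / n) (P k) :=
        sum_le_sum fun k _ ↦ two_mul_div_sub_add_truncationGain_le_mul_min hn (P k)

lemma inv_card_add_sq_sum_abs_sub_le_integral_min [MeasurableSpace ι]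
    [MeasurableSingletonClass ι] (μ : Measure ι) [IsProbabilityMeasure μ] :
    1 / Fintype.card ι + (∑ k, |μ.real {k} - 1 / Fintype.card ι|) ^ 2 / (2 * Fintype.card ι)
      ≤ ∫ k, min (3 / (Fintype.card ι : ℝ)) (μ.real {k}) ∂μ := by
  rw [integral_fintype .of_finite]
  exact inv_card_add_sq_sum_abs_sub_le_sum_mul_min (fun _ ↦ measureReal_nonneg) (by simp)

end

theorem truncated_weight_far_case_general (m t : ℕ) (hm : 1 ≤ m) (ht : 1 ≤ t)
    (ε : ℝ) (hε₀ : 0 < ε)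
    (μ : Measure (Fin m)) [IsProbabilityMeasure μ]
    (hfar : ε ≤ ∑ j : Fin m, |(μ {j}).toReal - 1 / m|) :
    (Measure.pi fun _ : Fin t => μ)
      {ω : Fin t → Fin m |
        ∑ j : Fin t, min (3 / (m : ℝ)) (μ {ω j}).toReal ≤ (1 + 3 * ε ^ 2 / 16) * t / m}
      ≤ ENNReal.ofReal (Real.exp (-(ε ^ 4 * t / 4608))) := by
  have : Nonempty (Fin m) := ⟨⟨0, hm⟩⟩
  set f : Fin m → ℝ := fun k ↦ min (3 / (m : ℝ)) (μ.real {k})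
  have hmean : (1 + ε ^ 2 / 2) / m ≤ μ[f] := by
    have h := inv_card_add_sq_sum_abs_sub_le_integral_min μ
    rw [Fintype.card_fin] at h
    have hε : ε ^ 2 ≤ (∑ k, |μ.real {k} - 1 / m|) ^ 2 := pow_le_pow_left₀ hε₀.le hfar 2
    calc (1 + ε ^ 2 / 2) / m = 1 / m + ε ^ 2 / (2 * m) := by ring
      _ ≤ 1 / m + (∑ k, |μ.real {k} - 1 / m|) ^ 2 / (2 * m) := by gcongr
      _ ≤ μ[f] := h
  set s := t * μ[f] - (1 + 3 * ε ^ 2 / 16) * t / m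
  have hs : 5 * t * ε ^ 2 / (16 * m) ≤ s := by
    have h := mul_le_mul_of_nonneg_left hmean (Nat.cast_nonneg t)
    have : 5 * t * ε ^ 2 / (16 * m) = t * ((1 + ε ^ 2 / 2) / m) - (1 + 3 * ε ^ 2 / 16) * t / m :=
      by field_simp; ring
    linarith
  have hoeff := measureReal_pi_sum_le_le_exp_of_mem_Icc (ι := Fin t) μ (f := f) (a := 0)
    (b := 3 / m) (by fun_prop)
    (ae_of_all _ fun k ↦ ⟨le_min (by positivity) measureReal_nonneg, min_le_left _ _⟩)
    ((by positivity : (0 : ℝ) ≤ 5 * t * ε ^ 2 / (16 * m)).trans hs)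
  rw [Fintype.card_fin, sub_sub_cancel, sub_zero] at hoeff
  clear_value s
  have hexp : ε ^ 4 * t / 4608 ≤ s ^ 2 / (2 * t * (3 / m / 2) ^ 2) := by
    have hs2 := pow_le_pow_left₀ (by positivity) hs 2
    rw [le_div_iff₀ (by positivity)]
    field_simp at hs2 ⊢
    nlinarith
  rw [← ENNReal.ofReal_toReal (measure_ne_top _ _)]
  exact ENNReal.ofReal_le_ofReal (hoeff.trans (by rwa [exp_le_exp, neg_div, neg_le_neg_iff]))

/-- Concentration in the far-from-uniform case: if `μ` is `ε`-far from uniform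
in `L₁`, then the truncated empirical weight `W̃(ω) = ∑_{j<t} min(3/m, P(ω j))`
of `t` i.i.d. samples is at most `(1 + 3ε²/16)·t/m` with probability at most
`exp(−ε⁴t/4608)`. -/
theorem truncated_weight_far_case (m t : ℕ) (hm : 1 ≤ m) (ht : 1 ≤ t)
    (ε : ℝ) (hε₀ : 0 < ε) (hε₂ : ε ≤ 2)
    (μ : Measure (Fin m)) [IsProbabilityMeasure μ]
    (hfar : ε ≤ ∑ j : Fin m, |(μ {j}).toReal - 1 / m|) :
    (Measure.pi fun _ : Fin t => μ)
      {ω : Fin t → Fin m |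
        ∑ j : Fin t, min (3 / (m : ℝ)) (μ {ω j}).toReal ≤ (1 + 3 * ε ^ 2 / 16) * t / m}
      ≤ ENNReal.ofReal (Real.exp (-(ε ^ 4 * t / 4608))) :=
  truncated_weight_far_case_general m t hm ht ε hε₀ μ hfar
end

section
/- Let μ be a probability measure on Fin m and let n ≥ 1; write P(y) = μ {y}. On the product space (Fin n → Fin m) with measure μ^{⊗n}, define the empirical distribution P̃(ω)(y) = |{ j : ω j = y }| / n. Then the expected L₁-distance between the empirical distribution and μ satisfies E[ ∑_{y ∈ Fin m} |P̃(ω)(y) − P(y)| ] ≤ √(m/n), where the expectation is the integral with respect to μ^{⊗n}. -/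
/-!
The number of occurrences of `y` in the sample is a sum of `n` independent indicators of mean
`p y := μ {y}`, so the empirical frequency of `y` has mean `p y` and variance at most `p y / n`.
Since `E|Z| ≤ √(E Z²)`, its expected distance to `p y` is at most `√(p y / n)`, and by
Cauchy–Schwarz `∑ y, √(p y) ≤ √m` because `∑ y, p y = 1`.
-/

open MeasureTheory ProbabilityTheory Finset

section
variable {Ω : Type*} {mΩ : MeasurableSpace Ω} {μ : Measure Ω} [IsProbabilityMeasure μ]

lemma sq_integral_abs_le_integral_sq {X : Ω → ℝ} (hX : MemLp X 2 μ) :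
    (∫ ω, |X ω| ∂μ) ^ 2 ≤ ∫ ω, X ω ^ 2 ∂μ := by
  have h := variance_nonneg |X| μ
  rw [variance_eq_sub hX.abs] at h
  simpa [sq_abs] using h

lemma integral_abs_sub_integral_le_sqrt_variance {X : Ω → ℝ} (hX : MemLp X 2 μ) :
    ∫ ω, |X ω - μ[X]| ∂μ ≤ √Var[X; μ] := by
  rw [variance_eq_integral hX.aemeasurable]
  exact (le_abs_self _).trans
    (Real.abs_le_sqrt (sq_integral_abs_le_integral_sq (hX.sub (memLp_const _))))

end

section
variable {ι α : Type*} [Fintype ι] {mα : MeasurableSpace α} {μ : Measure α} [IsProbabilityMeasure μ]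
  {f : α → ℝ} {s : Set α}

lemma integral_sum_comp_eval_pi (hf : Integrable f μ) :
    ∫ ω, ∑ i, f (ω i) ∂(Measure.pi fun _ : ι => μ) = Fintype.card ι * ∫ x, f x ∂μ := by
  rw [integral_finsetSum _ fun i _ => integrable_comp_eval hf]
  simp [integral_comp_eval (μ := fun _ => μ) hf.aestronglyMeasurable]

lemma variance_sum_comp_eval_pi (hf : MemLp f 2 μ) :
    Var[fun ω => ∑ i, f (ω i); Measure.pi fun _ : ι => μ] = Fintype.card ι * Var[f; μ] := by
  have h := variance_sum_pi (μ := fun _ : ι => μ) fun _ => hf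
  simp only [sum_const, card_univ, nsmul_eq_mul] at h
  rw [← h]
  congr 1
  ext ω
  simp

lemma integral_abs_sampleMean_sub_le [Nonempty ι] (hf : MemLp f 2 μ) :
    ∫ ω, |(∑ i, f (ω i)) / Fintype.card ι - ∫ x, f x ∂μ| ∂(Measure.pi fun _ : ι => μ)
      ≤ √(Var[f; μ] / Fintype.card ι) := by
  have hN : 0 < (Fintype.card ι : ℝ) := by positivity
  set P := Measure.pi fun _ : ι => μ
  set S : (ι → α) → ℝ := fun ω => ∑ i, f (ω i)
  have hS : MemLp S 2 P :=
    memLp_finsetSum _ fun i _ => hf.comp_measurePreserving (measurePreserving_eval _ i)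
  have hmean : ∫ x, f x ∂μ = P[S] / Fintype.card ι := by
    rw [integral_sum_comp_eval_pi (hf.integrable one_le_two)]
    field_simp
  calc ∫ ω, |S ω / Fintype.card ι - ∫ x, f x ∂μ| ∂P
        = (∫ ω, |S ω - P[S]| ∂P) / Fintype.card ι := by
        rw [← integral_div]
        congr 1 with ω
        rw [hmean, ← sub_div, abs_div, abs_of_pos hN]
    _ ≤ √Var[S; P] / Fintype.card ι := by
        gcongr
        exact integral_abs_sub_integral_le_sqrt_variance hS
    _ = √(Var[f; μ] / Fintype.card ι) := by
        rw [variance_sum_comp_eval_pi hf, ← Real.sqrt_sq hN.le, ← Real.sqrt_div' _ (sq_nonneg _),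
          Real.sqrt_sq hN.le]
        congr 1
        field_simp

lemma variance_indicator_one_le (hs : MeasurableSet s) : Var[s.indicator 1; μ] ≤ μ.real s := by
  have h := variance_le_expectation_sq (μ := μ) (X := s.indicator 1)
    ((integrable_const (1 : ℝ)).indicator hs).aestronglyMeasurable
  have hsq : s.indicator (1 : α → ℝ) ^ 2 = s.indicator 1 := by
    ext x
    by_cases hx : x ∈ s <;> simp [hx]
  rwa [hsq, integral_indicator_one hs] at h

lemma integral_abs_empiricalFrequency_sub_le [Nonempty ι] (hs : MeasurableSet s) :
    ∫ ω, |(∑ i, s.indicator (1 : α → ℝ) (ω i)) / Fintype.card ι - μ.real s|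
        ∂(Measure.pi fun _ : ι => μ)
      ≤ √(μ.real s / Fintype.card ι) := by
  have hs1 : MemLp (s.indicator (1 : α → ℝ)) 2 μ :=
    memLp_indicator_const 2 hs 1 (.inr (measure_ne_top μ s))
  calc _ ≤ √(Var[s.indicator 1; μ] / Fintype.card ι) := by
        simpa [integral_indicator_one hs] using integral_abs_sampleMean_sub_le hs1
    _ ≤ _ := by gcongr; exact variance_indicator_one_le hs
end

lemma sum_sqrt_le_sqrt_card_mul_sum {ι : Type*} (s : Finset ι) {f : ι → ℝ}
    (hf : ∀ i, 0 ≤ f i) :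
    ∑ i ∈ s, √(f i) ≤ √(#s * ∑ i ∈ s, f i) := by
  simpa [Real.sqrt_mul (Nat.cast_nonneg _)] using
    Real.sum_sqrt_mul_sqrt_le s (f := fun _ => 1) (fun _ => zero_le_one) hf

lemma card_filter_eq_sum_indicator {ι α : Type*} [Fintype ι] [DecidableEq α] (ω : ι → α)
    (y : α) :
    ((univ.filter fun j => ω j = y).card : ℝ) = ∑ j, ({y} : Set α).indicator 1 (ω j) := by
  rw [natCast_card_filter]
  simp [Set.indicator_apply]

/-- The empirical distribution of `n` i.i.d. samples from `μ` is within expected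
`L₁`-distance `√(m/n)` of `μ`. -/
theorem empirical_distribution_L1_error (m n : ℕ) (hn : 1 ≤ n)
    (μ : Measure (Fin m)) [IsProbabilityMeasure μ] :
    (∫ ω : Fin n → Fin m,
        ∑ y : Fin m,
          |((univ.filter fun j : Fin n => ω j = y).card : ℝ) / n - (μ {y}).toReal|
        ∂(Measure.pi fun _ : Fin n => μ))
      ≤ Real.sqrt (m / n) := by
  have : Nonempty (Fin n) := ⟨⟨0, hn⟩⟩
  calc _ = ∑ y : Fin m, ∫ ω : Fin n → Fin m,
          |(∑ j, ({y} : Set (Fin m)).indicator (1 : Fin m → ℝ) (ω j)) / Fintype.card (Fin n)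
            - μ.real {y}| ∂(Measure.pi fun _ : Fin n => μ) := by
        rw [integral_finsetSum _ fun _ _ => Integrable.of_finite]
        simp only [card_filter_eq_sum_indicator, Fintype.card_fin, measureReal_def]
    _ ≤ ∑ y : Fin m, √(μ.real {y} / n) := by
        gcongr with y
        simpa using
          integral_abs_empiricalFrequency_sub_le (ι := Fin n) (μ := μ) (measurableSet_singleton y)
    _ ≤ √(m / n) := by
        refine (sum_sqrt_le_sqrt_card_mul_sum univ fun y => by positivity).trans_eq ?_
        rw [← sum_div, sum_measureReal_singleton]
        simp [div_eq_mul_inv]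
end

section
/- Let m be a positive even natural number and let x : Fin m → {0,1} be a string with exactly m/2 ones. Define the probability distribution P_f on Fin m by P_f(j) = 2/m if x j = 1 and P_f(j) = 0 if x j = 0. Let P : Fin m → ℝ be any function, and define x̃ : Fin m → {0,1} by x̃ j = 1 if P j ≥ 1/m and x̃ j = 0 otherwise. Then ∑_{j} |P j − P_f j| ≥ d(x, x̃)/m, where d(x, x̃) = |{ j : x j ≠ x̃ j }| is the Hamming distance between x and x̃. -/
open Finset

/-- Rounding step of the reconstruction lower bound: if `P_f` puts mass `2/m` on
the coordinates where `x` is `1` and mass `0` elsewhere, and `x̃` is obtained from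
an arbitrary `P` by thresholding at `1/m`, then the `L₁`-distance between `P` and
`P_f` is at least the Hamming distance `d(x, x̃)` divided by `m`. -/
theorem reconstruction_rounding (m : ℕ) (hm : 0 < m) (hmeven : Even m)
    (x : Fin m → Bool)
    (hx : (univ.filter fun j => x j = true).card = m / 2)
    (P : Fin m → ℝ) :
    ((univ.filter fun j =>
        x j ≠ (if 1 / (m : ℝ) ≤ P j then true else false)).card : ℝ) / m ≤
      ∑ j, |P j - if x j = true then 2 / (m : ℝ) else 0| := by
  have hmR : (0:ℝ) < m := by exact_mod_cast hm
  set S := univ.filter fun j =>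
      x j ≠ (if 1 / (m : ℝ) ≤ P j then true else false) with hS
  have key : ∀ j ∈ S, 1 / (m:ℝ) ≤ |P j - if x j = true then 2 / (m : ℝ) else 0| := by
    intro j hj
    simp only [hS, mem_filter, mem_univ, true_and] at hj
    by_cases h : 1 / (m : ℝ) ≤ P j
    · have hb : x j = false := by
        by_contra hb'
        simp only [Bool.not_eq_false] at hb'
        rw [one_div] at h
        simp [hb', h] at hj
      rw [if_neg (by simp [hb]), sub_zero]
      rw [abs_of_nonneg (by linarith [one_div_pos.mpr hmR])]
      exact h
    · have hb : x j = true := by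
        by_contra hb'
        simp only [Bool.not_eq_true] at hb'
        rw [one_div] at h
        simp [hb', h] at hj
      rw [if_pos hb]
      push_neg at h
      have h2 : 1 / (m:ℝ) + 1 / (m:ℝ) = 2 / (m:ℝ) := by ring
      have h1 : 0 < 1 / (m:ℝ) := one_div_pos.mpr hmR
      rw [abs_of_nonpos (by linarith)]
      linarith
  calc (S.card : ℝ) / m = ∑ _j ∈ S, 1 / (m:ℝ) := by
        rw [Finset.sum_const, nsmul_eq_mul]; ring
    _ ≤ ∑ j ∈ S, |P j - if x j = true then 2 / (m : ℝ) else 0| :=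
        Finset.sum_le_sum key
    _ ≤ ∑ j, |P j - if x j = true then 2 / (m : ℝ) else 0| :=
        Finset.sum_le_sum_of_subset_of_nonneg (Finset.filter_subset _ _)
          (fun j _ _ => abs_nonneg _)
end

section
/- Let n, m, r, d be natural numbers with m ≥ 1, 1 ≤ r ≤ n, and d ≤ n. For a positive integer p, call a function g : Fin n → Fin m p-periodic if g i = g j whenever i ≡ j (mod p). Then the number of functions f : Fin n → Fin m for which there exist a positive integer p ≤ r and a p-periodic function g : Fin n → Fin m with |{ i : f i ≠ g i }| ≤ d is at most r · m^r · C(n, d) · m^d, where C(n,d) denotes the binomial coefficient n choose d. -/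
open Finset

private def decg {n m r : ℕ} (hrn : r ≤ n) (p : Fin r) (v : Fin r → Fin m) (i : Fin n) :
    Fin m :=
  v ⟨(i : ℕ) % (p.1 + 1), lt_of_lt_of_le (Nat.mod_lt _ (Nat.succ_pos _)) p.isLt⟩

/-- Counting bound from the classical periodicity lower bound: the number of
functions `f : Fin n → Fin m` that are within Hamming distance `d` of some
`p`-periodic function with `0 < p ≤ r` is at most `r · m^r · C(n,d) · m^d`. -/
theorem count_close_to_periodic (n m r d : ℕ) (hm : 1 ≤ m)
    (hr₁ : 1 ≤ r) (hrn : r ≤ n) (hd : d ≤ n) :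
    Nat.card {f : Fin n → Fin m //
        ∃ p : ℕ, 0 < p ∧ p ≤ r ∧
          ∃ g : Fin n → Fin m,
            (∀ i j : Fin n, (i : ℕ) % p = (j : ℕ) % p → g i = g j) ∧
            (univ.filter fun i => f i ≠ g i).card ≤ d}
      ≤ r * m ^ r * n.choose d * m ^ d := by
  classical
  set S := {f : Fin n → Fin m //
        ∃ p : ℕ, 0 < p ∧ p ≤ r ∧
          ∃ g : Fin n → Fin m,
            (∀ i j : Fin n, (i : ℕ) % p = (j : ℕ) % p → g i = g j) ∧
            (univ.filter fun i => f i ≠ g i).card ≤ d} with hS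
  let T := Fin r × (Fin r → Fin m) × {s : Finset (Fin n) // s.card = d} × (Fin d → Fin m)
  let dec : T → S := fun x => by
    obtain ⟨p, v, ⟨s, hs⟩, w⟩ := x
    refine ⟨fun i => if h : i ∈ s then w (Fin.cast hs (s.equivFin ⟨i, h⟩))
      else decg hrn p v i, p.1 + 1, Nat.succ_pos _, p.isLt, decg hrn p v, ?_, ?_⟩
    · intro i j hij
      simp only [decg]
      congr 1
      exact Fin.ext hij
    · refine le_trans (card_le_card ?_) hs.le
      intro i hi
      simp only [mem_filter] at hi
      by_contra h
      exact hi.2 (by simp [h])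
  have hsurj : Function.Surjective dec := by
    rintro ⟨f, p, hp0, hpr, g, hper, hcard⟩
    obtain ⟨s, hsub, hs⟩ := Finset.exists_superset_card_eq hcard
      (by simpa using hd)
    refine ⟨⟨⟨p - 1, by omega⟩, fun j => g ⟨j, lt_of_lt_of_le j.isLt hrn⟩, ⟨s, hs⟩,
      fun k => f (s.equivFin.symm (Fin.cast hs.symm k))⟩, ?_⟩
    apply Subtype.ext
    funext i
    simp only [dec]
    by_cases h : i ∈ s
    · simp only [h, dif_pos]
      congr 1
      have : Fin.cast hs.symm (Fin.cast hs (s.equivFin ⟨i, h⟩)) = s.equivFin ⟨i, h⟩ :=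
        Fin.ext rfl
      rw [this, Equiv.symm_apply_apply]
    · rw [dif_neg h]
      have hq : p - 1 + 1 = p := by omega
      have hiA : i ∉ univ.filter fun i => f i ≠ g i := fun hi => h (hsub hi)
      have hfi : f i = g i := by
        simp only [mem_filter, mem_univ, true_and, not_not] at hiA
        exact hiA
      rw [hfi]
      show g _ = g i
      apply hper
      simp only [hq]
      exact Nat.mod_mod_of_dvd _ dvd_rfl
  calc Nat.card S ≤ Nat.card T := Nat.card_le_card_of_surjective dec hsurj
    _ = r * m ^ r * n.choose d * m ^ d := by
        simp [T, Nat.card_eq_fintype_card, Fintype.card_finset_len]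
        ring
end
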